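/- arXiv:1806.11524 — 7 statements merged into one kernel-verified Lean document; each statement's English description precedes it below -/
import Mathlib

section
/- Let G be an abelian Polish group. If A ⊆ G is an F_σ set that is Haar meager, then A is strongly Haar meager. -/
/-- A set in an abelian Polish group is Haar meager (Darji) if some Borel superset has a
continuous witness function from a nonempty compact metric space all of whose preimages of
translates are meager. -/
def HaarMeager {G : Type*} [AddCommGroup G] [TopologicalSpace G] (A : Set G) : Prop :=
  ∃ B : Set G, A ⊆ B ∧ @MeasurableSet G (borel G) B ∧
    ∃ (K : Type) (_ : MetricSpace K), Nonempty K ∧ CompactSpace K ∧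
      ∃ f : K → G, Continuous f ∧ ∀ g : G, IsMeagre (f ⁻¹' ((fun x => x + g) '' B))

/-- A set is strongly Haar meager if some Borel superset has a compact witness set meeting
every translate in a relatively meager set. -/
def StronglyHaarMeager {G : Type*} [AddCommGroup G] [TopologicalSpace G] (A : Set G) : Prop :=
  ∃ B : Set G, A ⊆ B ∧ @MeasurableSet G (borel G) B ∧
    ∃ C : Set G, C.Nonempty ∧ IsCompact C ∧
      ∀ g : G, IsMeagre (Subtype.val ⁻¹' ((fun x => x + g) '' B) : Set C)

/-!
Take `B := A` and `C := range f` for a Haar-meagre witness `f : K → G`. A translate of a closed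
piece of `A` meets `C` in a relatively closed set; an interior point of it in `C` would pull back
along the surjection `K → C` to a nonempty open subset of `f⁻¹(B + g)`, impossible because that
set is meagre in the Baire space `K`. So `(A + g) ∩ C` is a countable union of nowhere dense
subsets of `C`.
-/

open Set Function

section

variable {K X : Type*} [TopologicalSpace K] [TopologicalSpace X]

lemma interior_val_preimage_range_eq_empty {f : K → X} (hf : Continuous f) {S : Set X}
    (hS : interior (f ⁻¹' S) = ∅) : interior (Subtype.val ⁻¹' S : Set (range f)) = ∅ := by
  have hsub : rangeFactorization f ⁻¹' interior (Subtype.val ⁻¹' S) ⊆ interior (f ⁻¹' S) :=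
    interior_maximal (preimage_mono interior_subset)
      (isOpen_interior.preimage hf.rangeFactorization)
  rw [hS, subset_empty_iff] at hsub
  rw [← rangeFactorization_surjective.image_preimage (interior _), hsub, image_empty]

lemma isMeagre_val_preimage_range_of_isClosed [BaireSpace K] {f : K → X} (hf : Continuous f)
    {F : Set X} (hF : IsClosed F) (h : IsMeagre (f ⁻¹' F)) :
    IsMeagre (Subtype.val ⁻¹' F : Set (range f)) :=
  ((hF.preimage continuous_subtype_val).isNowhereDense_iff.2 <|
    interior_val_preimage_range_eq_empty hf <|
      interior_eq_empty_iff_dense_compl.2 (dense_of_mem_residual h)).isMeagre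

end

theorem fsigma_haarMeager_is_stronglyHaarMeager_general {G : Type*} [AddCommGroup G]
    [TopologicalSpace G] [IsTopologicalAddGroup G] (A : Set G)
    (hFsigma : ∃ f : ℕ → Set G, (∀ n, IsClosed (f n)) ∧ A = ⋃ n, f n)
    (hA : HaarMeager A) : StronglyHaarMeager A := by
  obtain ⟨B, hAB, -, K, _, _, _, f, hf, hmeagre⟩ := hA
  obtain ⟨F, hF, rfl⟩ := hFsigma
  refine ⟨⋃ n, F n, subset_rfl, ?_, range f, range_nonempty f, isCompact_range hf, fun g => ?_⟩
  · borelize G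
    exact MeasurableSet.iUnion fun n => (hF n).measurableSet
  · rw [image_iUnion, preimage_iUnion]
    refine isMeagre_iUnion fun n =>
      isMeagre_val_preimage_range_of_isClosed hf ((Homeomorph.addRight g).isClosedMap _ (hF n)) ?_
    exact (hmeagre g).mono (preimage_mono (image_mono ((subset_iUnion F n).trans hAB)))

theorem fsigma_haarMeager_is_stronglyHaarMeager {G : Type*} [AddCommGroup G]
    [TopologicalSpace G] [IsTopologicalAddGroup G] [PolishSpace G] (A : Set G)
    (hFsigma : ∃ f : ℕ → Set G, (∀ n, IsClosed (f n)) ∧ A = ⋃ n, f n)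
    (hA : HaarMeager A) : StronglyHaarMeager A :=
  fsigma_haarMeager_is_stronglyHaarMeager_general A hFsigma hA
end

section
/- A subset A of an abelian Polish group G is strongly Haar meager if and only if it is Haar meager with an injective witness function, i.e., there exist a Borel set B ⊇ A, a nonempty compact metric space K and an injective continuous f : K → G with f⁻¹(B+g) meager in K for all g ∈ G. -/
/-!
A compact witness set `C` is, via the Kuratowski embedding, homeomorphic to a compact metric
space `K : Type`, and the inclusion `C → G` transported to `K` is an injective continuous witness.
Conversely, an injective continuous map from a compact space into the Hausdorff space `G` is a
homeomorphism onto its compact range, which is then a witness set.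
-/

lemma Homeomorph.isMeagre_preimage {X Y : Type*} [TopologicalSpace X] [TopologicalSpace Y]
    (e : X ≃ₜ Y) {s : Set Y} : IsMeagre (e ⁻¹' s) ↔ IsMeagre s := by
  rw [IsMeagre, IsMeagre, ← Set.preimage_compl, ← e.residual_map_eq, Filter.mem_map]

lemma exists_compactSpace_homeomorph_metricSpace (X : Type*) [TopologicalSpace X]
    [TopologicalSpace.MetrizableSpace X] [CompactSpace X] [Nonempty X] :
    ∃ (K : Type) (_ : MetricSpace K), Nonempty K ∧ CompactSpace K ∧ Nonempty (X ≃ₜ K) := by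
  let := TopologicalSpace.metrizableSpaceMetric X
  let e : X ≃ₜ Set.range (kuratowskiEmbedding X) :=
    (kuratowskiEmbedding.isometry X).isEmbedding.toHomeomorph
  exact ⟨_, inferInstance, ⟨e (Classical.arbitrary X)⟩, e.compactSpace, ⟨e⟩⟩

lemma isMeagre_preimage_iff_of_injective {K G : Type*} [TopologicalSpace K] [CompactSpace K]
    [TopologicalSpace G] [T2Space G] {f : K → G} (hf : Continuous f) (hinj : Function.Injective f)
    (s : Set G) : IsMeagre (Subtype.val ⁻¹' s : Set (Set.range f)) ↔ IsMeagre (f ⁻¹' s) :=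
  ((hf.isClosedEmbedding hinj).toIsEmbedding.toHomeomorph).isMeagre_preimage.symm

theorem stronglyHaarMeager_iff_injective_witness_general {G : Type*} [AddCommGroup G]
    [TopologicalSpace G] [PolishSpace G] (A : Set G) :
    StronglyHaarMeager A ↔
      ∃ B : Set G, A ⊆ B ∧ @MeasurableSet G (borel G) B ∧
        ∃ (K : Type) (_ : MetricSpace K), Nonempty K ∧ CompactSpace K ∧
          ∃ f : K → G, Function.Injective f ∧ Continuous f ∧
            ∀ g : G, IsMeagre (f ⁻¹' ((fun x => x + g) '' B)) := by
  constructor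
  · rintro ⟨B, hAB, hB, C, hCne, hCc, hmeag⟩
    have : Nonempty C := hCne.to_subtype
    have : CompactSpace C := isCompact_iff_compactSpace.mp hCc
    obtain ⟨K, _, hK, _, ⟨e⟩⟩ := exists_compactSpace_homeomorph_metricSpace C
    exact ⟨B, hAB, hB, K, inferInstance, hK, inferInstance, Subtype.val ∘ e.symm,
      Subtype.val_injective.comp e.symm.injective, continuous_subtype_val.comp e.symm.continuous,
      fun g => e.symm.isMeagre_preimage.mpr (hmeag g)⟩
  · rintro ⟨B, hAB, hB, K, _, hK, _, f, hinj, hf, hmeag⟩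
    exact ⟨B, hAB, hB, Set.range f, Set.range_nonempty f, isCompact_range hf,
      fun g => (isMeagre_preimage_iff_of_injective hf hinj _).mpr (hmeag g)⟩

theorem stronglyHaarMeager_iff_injective_witness {G : Type*} [AddCommGroup G]
    [TopologicalSpace G] [IsTopologicalAddGroup G] [PolishSpace G] (A : Set G) :
    StronglyHaarMeager A ↔
      ∃ B : Set G, A ⊆ B ∧ @MeasurableSet G (borel G) B ∧
        ∃ (K : Type) (_ : MetricSpace K), Nonempty K ∧ CompactSpace K ∧
          ∃ f : K → G, Function.Injective f ∧ Continuous f ∧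
            ∀ g : G, IsMeagre (f ⁻¹' ((fun x => x + g) '' B)) :=
  stronglyHaarMeager_iff_injective_witness_general A
end

section
/- The function b : 𝒦(ℤ^ω) → ℕ^ω defined by b(K)_n = max{|x_n| : x ∈ K} + 1 is well-defined and continuous, where 𝒦(ℤ^ω) carries the Vietoris topology and ℕ^ω the product of discrete topologies. -/
open TopologicalSpace Metric

noncomputable local instance : MetricSpace (ℕ → ℤ) := PiCountable.metricSpace

/-- `b(K)_n = max { |x_n| : x ∈ K } + 1` (as a supremum in `ℕ`). -/
noncomputable def bFun (K : NonemptyCompacts (ℕ → ℤ)) : ℕ → ℕ :=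
  fun n => sSup {m : ℕ | ∃ x ∈ K, (x n).natAbs = m} + 1

private lemma coord_eq_of_dist_lt {x y : ℕ → ℤ} {n : ℕ}
    (h : dist x y < (1/2)^n) : x n = y n := by
  have h1 : dist (x n) (y n) ≤ dist x y := by
    apply PiCountable.dist_le_dist_pi_of_dist_lt
    simpa using h
  have h2 : dist (x n) (y n) < 1 := by
    calc dist (x n) (y n) ≤ dist x y := h1
    _ < (1/2:ℝ)^n := h
    _ ≤ 1 := by apply pow_le_one₀ <;> norm_num
  rw [Int.dist_eq] at h2
  have h3 : (|((x n : ℤ) - y n)| : ℝ) < 1 := h2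
  have : |x n - y n| < 1 := by exact_mod_cast h3
  have := Int.abs_lt_one_iff.mp this
  omega

private lemma bSet_eq (K : NonemptyCompacts (ℕ → ℤ)) (n : ℕ) :
    {m : ℕ | ∃ x ∈ K, (x n).natAbs = m} = (fun x => (x n).natAbs) '' (K : Set (ℕ → ℤ)) := rfl

private lemma bSet_finite (K : NonemptyCompacts (ℕ → ℤ)) (n : ℕ) :
    {m : ℕ | ∃ x ∈ K, (x n).natAbs = m}.Finite := by
  rw [bSet_eq]
  have hcont : Continuous fun x : ℕ → ℤ => (x n).natAbs :=
    (continuous_of_discreteTopology (f := Int.natAbs)).comp (continuous_apply n)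
  exact (K.isCompact.image hcont).finite_of_discrete

private lemma bSet_nonempty (K : NonemptyCompacts (ℕ → ℤ)) (n : ℕ) :
    {m : ℕ | ∃ x ∈ K, (x n).natAbs = m}.Nonempty := by
  obtain ⟨x, hx⟩ := K.nonempty
  exact ⟨(x n).natAbs, x, hx, rfl⟩

/-- nearby compacts have the same `bFun` value at coordinate `n` -/
private lemma bFun_eq_of_dist_lt {K K' : NonemptyCompacts (ℕ → ℤ)} {n : ℕ}
    (h : dist K K' < (1/2)^n) : bFun K n = bFun K' n := by
  have hfin : EMetric.hausdorffEdist (K : Set (ℕ → ℤ)) K' ≠ ⊤ :=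
    hausdorffEdist_ne_top_of_nonempty_of_bounded K.nonempty K'.nonempty
      K.isCompact.isBounded K'.isCompact.isBounded
  have hd : hausdorffDist (K : Set (ℕ → ℤ)) K' < (1/2)^n := h
  have hset : {m : ℕ | ∃ x ∈ K, (x n).natAbs = m} = {m : ℕ | ∃ x ∈ K', (x n).natAbs = m} := by
    ext m
    constructor
    · rintro ⟨x, hx, rfl⟩
      obtain ⟨y, hy, hxy⟩ := exists_dist_lt_of_hausdorffDist_lt hx hd hfin
      exact ⟨y, hy, by rw [← coord_eq_of_dist_lt hxy]⟩
    · rintro ⟨x, hx, rfl⟩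
      obtain ⟨y, hy, hxy⟩ := exists_dist_lt_of_hausdorffDist_lt' hx hd hfin
      exact ⟨y, hy, by rw [coord_eq_of_dist_lt hxy]⟩
  unfold bFun
  rw [hset]

/-- `b` is well defined (the maximum is attained) and continuous from the hyperspace of
nonempty compact subsets of `ℤ^ω` to `ℕ^ω` with the product of discrete topologies. -/
theorem bFun_wellDefined_and_continuous :
    (∀ (K : NonemptyCompacts (ℕ → ℤ)) (n : ℕ),
        ∃ x ∈ K, (x n).natAbs + 1 = bFun K n ∧ ∀ y ∈ K, (y n).natAbs ≤ (x n).natAbs) ∧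
      Continuous bFun := by
  constructor
  · intro K n
    have hmem : sSup {m : ℕ | ∃ x ∈ K, (x n).natAbs = m} ∈
        {m : ℕ | ∃ x ∈ K, (x n).natAbs = m} :=
      Nat.sSup_mem (bSet_nonempty K n) (bSet_finite K n).bddAbove
    obtain ⟨x, hx, hxs⟩ := hmem
    refine ⟨x, hx, by rw [bFun, hxs], fun y hy => ?_⟩
    rw [hxs]
    exact le_csSup (bSet_finite K n).bddAbove ⟨y, hy, rfl⟩
  · refine continuous_pi fun n => ?_
    rw [continuous_discrete_rng]
    intro b
    rw [isOpen_iff_mem_nhds]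
    intro K hK
    filter_upwards [Metric.ball_mem_nhds K (by positivity : (0:ℝ) < (1/2)^n)] with K' hK'
    rw [Metric.mem_ball, dist_comm] at hK'
    simp only [Set.mem_preimage, Set.mem_singleton_iff] at hK ⊢
    rw [← bFun_eq_of_dist_lt hK', hK]
end

section
/- There exists a continuous map t : 𝒦(ℤ^ω) → ℤ^ω such that the map T(K, x) = x + t(K) is a homeomorphism from H = {(K,x) : x ∈ K} onto a closed subset F of ℤ^ω, the sets K + t(K) for K ∈ 𝒦(ℤ^ω) are pairwise disjoint with union F, and moreover (K + t(K) + {-1,0,1}^ω) ∩ F = K + t(K) for every K ∈ 𝒦(ℤ^ω). -/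
/-!
The `n`-th coordinate of `t K` encodes the finite profile `K↾n = {x|[0,n] : x ∈ K}`: the countably
many possible profiles are enumerated, and to each one is assigned an integer interval long enough
to contain the `n`-th coordinates of all its members, the intervals being pairwise disjoint and a
unit apart. Hence the `n`-th coordinate of `x + t K + ε`, with `x ∈ K` and `ε ∈ {-1,0,1}^ω`,
determines `K↾n` and `x n`. The profiles of `K` determine `K`, and equality of `n`-th profiles is
the `n`-th basic entourage of the Hausdorff uniformity, so `(K, x) ↦ x + t K` is a uniform embedding
of the complete space `H`, hence a closed embedding; disjointness and the `{-1,0,1}^ω` condition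
follow from the same decoding.
-/

open TopologicalSpace Set Topology Pointwise

open Filter Uniformity Preorder

-- `Int.instMetricSpace` is pulled back from `ℝ` along a uniform embedding of `(ℤ, ⊥)`.
instance Int.instDiscreteUniformity : DiscreteUniformity ℤ := ⟨rfl⟩

/-- The intervals `[intervalCenter b m - b m, intervalCenter b m + b m]` lie end to end,
separated by gaps of length one. -/
def intervalCenter (b : ℕ → ℕ) (m : ℕ) : ℤ := ∑ i ∈ Finset.range m, (2 * b i + 1 : ℤ) + b m

lemma intervalCenter_add_lt_add {b : ℕ → ℕ} {j k : ℕ} (hjk : j < k) {u v : ℤ} (hu : |u| ≤ b j)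
    (hv : |v| ≤ b k) : intervalCenter b j + u < intervalCenter b k + v := by
  have hsum : ∑ i ∈ Finset.range (j + 1), (2 * b i + 1 : ℤ) ≤
      ∑ i ∈ Finset.range k, (2 * b i + 1 : ℤ) :=
    Finset.sum_le_sum_of_subset_of_nonneg (Finset.range_subset_range.2 hjk) fun _ _ _ => by
      positivity
  rw [Finset.sum_range_succ] at hsum
  rw [abs_le] at hu hv
  unfold intervalCenter
  linarith

lemma eq_of_intervalCenter_add_eq {b : ℕ → ℕ} {j k : ℕ} {u v : ℤ} (hu : |u| ≤ b j)
    (hv : |v| ≤ b k) (h : intervalCenter b j + u = intervalCenter b k + v) : j = k := by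
  rcases lt_trichotomy j k with hjk | hjk | hjk
  · exact absurd h (intervalCenter_add_lt_add hjk hu hv).ne
  · exact hjk
  · exact absurd h (intervalCenter_add_lt_add hjk hv hu).ne'

def CentersApart {α : Type*} (r : α → ℕ) (c : α → ℤ) : Prop :=
  ∀ a a' (u v : ℤ), |u| ≤ r a → |v| ≤ r a' → c a + u = c a' + v → a = a'

lemma exists_centersApart {α : Type*} [Countable α] (r : α → ℕ) : ∃ c, CentersApart r c := by
  obtain ⟨e, he⟩ := Countable.exists_injective_nat α
  refine ⟨fun a => intervalCenter (Function.extend e r 0) (e a), fun a a' u v hu hv h => he ?_⟩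
  rw [← he.extend_apply r 0] at hu hv
  exact eq_of_intervalCenter_add_eq hu hv h

lemma uniformContinuous_iff_setOf_eq_mem_uniformity {α β : Type*} [UniformSpace α]
    [UniformSpace β] [DiscreteUniformity β] {f : α → β} :
    UniformContinuous f ↔ {p : α × α | f p.1 = f p.2} ∈ 𝓤 α := by
  rw [UniformContinuous, DiscreteUniformity.eq_principal_setRelId (X := β), tendsto_principal]
  rfl

lemma mem_hausdorffEntourage_setOf_eq_iff {α β : Type*} {f : α → β} {s t : Set α} :
    (s, t) ∈ hausdorffEntourage {p : α × α | f p.1 = f p.2} ↔ f '' s = f '' t := by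
  rw [mem_hausdorffEntourage, subset_antisymm_iff, Set.image_subset_iff, Set.image_subset_iff]
  have key : ∀ u : Set α, SetRel.preimage {p : α × α | f p.1 = f p.2} u = f ⁻¹' (f '' u) ∧
      SetRel.image {p : α × α | f p.1 = f p.2} u = f ⁻¹' (f '' u) := fun u => by
    constructor <;> ext a <;> simp [SetRel.preimage, SetRel.image, eq_comm]
  rw [(key t).1, (key s).2]

lemma hasBasis_uniformity_pi_frestrictLe {E : ℕ → Type*} [∀ i, UniformSpace (E i)]
    [∀ i, DiscreteUniformity (E i)] :
    (𝓤 (∀ i, E i)).HasBasis (fun _ => True)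
      fun n => {p | frestrictLe n p.1 = frestrictLe n p.2} := by
  have h : 𝓤 (∀ i, E i) = ⨅ i, 𝓟 {p : (∀ i, E i) × (∀ i, E i) | p.1 i = p.2 i} := by
    simp only [Pi.uniformity, DiscreteUniformity.eq_principal_setRelId, comap_principal]
    rfl
  rw [h]
  refine (hasBasis_iInf_principal_finite _).to_hasBasis (fun t ht => ?_)
    fun n _ => ⟨Set.Iic n, Set.finite_Iic n, fun p hp => ?_⟩
  · obtain ⟨n, hn⟩ := ht.bddAbove
    exact ⟨n, trivial, fun p hp =>
      mem_iInter₂.2 fun i hi => congrFun hp ⟨i, Finset.mem_Iic.2 (hn hi)⟩⟩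
  · exact funext fun i => mem_iInter₂.1 hp i.1 (Finset.mem_Iic.1 i.2)

theorem TopologicalSpace.NonemptyCompacts.isClosed_setOf_mem {α : Type*} [TopologicalSpace α]
    [T2Space α] : IsClosed {q : NonemptyCompacts α × α | q.2 ∈ q.1} := by
  have h : {q : NonemptyCompacts α × α | q.2 ∈ q.1}ᶜ = (fun q => (q.1, {q.2})) ⁻¹'
      {p : NonemptyCompacts α × NonemptyCompacts α | Disjoint (p.1 : Set α) p.2} := by
    ext; simp
  rw [← isOpen_compl_iff, h]
  exact NonemptyCompacts.isOpen_setOfPred_disjoint_coe.preimage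
    (continuous_fst.prodMk (NonemptyCompacts.continuous_singleton.comp continuous_snd))

namespace CompactsApart

noncomputable def profile (n : ℕ) (K : NonemptyCompacts (ℕ → ℤ)) : Finset (Finset.Iic n → ℤ) :=
  (K.isCompact.image (continuous_frestrictLe n)).finite_of_discrete.toFinset

lemma coe_profile (n : ℕ) (K : NonemptyCompacts (ℕ → ℤ)) :
    (profile n K : Set (Finset.Iic n → ℤ)) = frestrictLe (π := fun _ => ℤ) n '' K :=
  Set.Finite.coe_toFinset _

lemma profile_eq_iff {n : ℕ} {K K' : NonemptyCompacts (ℕ → ℤ)} :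
    profile n K = profile n K' ↔
      frestrictLe (π := fun _ => ℤ) n '' K = frestrictLe (π := fun _ => ℤ) n '' K' := by
  rw [← Finset.coe_inj, coe_profile, coe_profile]

lemma hasBasis_uniformity_profile :
    (𝓤 (NonemptyCompacts (ℕ → ℤ))).HasBasis (fun _ => True)
      fun n => {p | profile n p.1 = profile n p.2} :=
  hasBasis_uniformity_pi_frestrictLe.uniformity_nonemptyCompacts.congr (fun _ => Iff.rfl)
    fun _ _ => by
      ext ⟨K, K'⟩
      exact mem_hausdorffEntourage_setOf_eq_iff.trans profile_eq_iff.symm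

lemma eq_of_forall_profile_eq {K K' : NonemptyCompacts (ℕ → ℤ)}
    (h : ∀ n, profile n K = profile n K') : K = K' :=
  eq_of_uniformity_basis hasBasis_uniformity_profile fun _ => h _

/-- The `+ 1` leaves room for a perturbation by `ε ∈ {-1, 0, 1}`. -/
def radius (n : ℕ) (A : Finset (Finset.Iic n → ℤ)) : ℕ :=
  A.sup (fun v => (v ⟨n, Finset.mem_Iic.2 le_rfl⟩).natAbs) + 1

lemma abs_add_one_le_radius {K : NonemptyCompacts (ℕ → ℤ)} {x : ℕ → ℤ} (hx : x ∈ K) (n : ℕ) :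
    |x n| + 1 ≤ radius n (profile n K) := by
  have hmem : frestrictLe (π := fun _ => ℤ) n x ∈ profile n K := by
    rw [← Finset.mem_coe, coe_profile]
    exact Set.mem_image_of_mem _ hx
  have := Finset.le_sup
    (f := fun v : Finset.Iic n → ℤ => (v ⟨n, Finset.mem_Iic.2 le_rfl⟩).natAbs) hmem
  rw [radius, Int.abs_eq_natAbs]
  exact_mod_cast Nat.add_le_add_right this 1

noncomputable def shift (c : ∀ n : ℕ, Finset (Finset.Iic n → ℤ) → ℤ)
    (K : NonemptyCompacts (ℕ → ℤ)) : ℕ → ℤ :=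
  fun n => c n (profile n K)

lemma uniformContinuous_shift (c : ∀ n : ℕ, Finset (Finset.Iic n → ℤ) → ℤ) :
    UniformContinuous (shift c) :=
  uniformContinuous_pi.2 fun n => uniformContinuous_iff_setOf_eq_mem_uniformity.2 <|
    mem_of_superset (hasBasis_uniformity_profile.mem_of_mem (i := n) trivial)
      fun _ hp => congrArg (c n) (show profile n _ = profile n _ from hp)

section Decoding

variable {c : ∀ n : ℕ, Finset (Finset.Iic n → ℤ) → ℤ} {K K' : NonemptyCompacts (ℕ → ℤ)}
  {x x' : ℕ → ℤ}

lemma profile_eq_of_add_shift_add_eq (hc : ∀ n, CentersApart (radius n) (c n)) (hx : x ∈ K)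
    (hx' : x' ∈ K') {n : ℕ} {ε : ℤ} (hε : |ε| ≤ 1)
    (h : x n + shift c K n + ε = x' n + shift c K' n) : profile n K = profile n K' := by
  refine hc n _ _ (x n + ε) (x' n) ?_ ?_ (by unfold shift at h; linarith)
  · exact (abs_add_le _ _).trans (by linarith [abs_add_one_le_radius hx n])
  · linarith [abs_add_one_le_radius hx' n]

lemma eq_of_add_shift_add_eq (hc : ∀ n, CentersApart (radius n) (c n)) (hx : x ∈ K)
    (hx' : x' ∈ K') {ε : ℕ → ℤ} (hε : ∀ n, |ε n| ≤ 1)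
    (h : x + shift c K + ε = x' + shift c K') : K = K' :=
  eq_of_forall_profile_eq fun n => profile_eq_of_add_shift_add_eq hc hx hx' (hε n) (congrFun h n)

lemma profile_eq_and_apply_eq (hc : ∀ n, CentersApart (radius n) (c n)) (hx : x ∈ K)
    (hx' : x' ∈ K') {n : ℕ} (h : x n + shift c K n = x' n + shift c K' n) :
    profile n K = profile n K' ∧ x n = x' n := by
  have hK : profile n K = profile n K' :=
    profile_eq_of_add_shift_add_eq hc hx hx' (ε := 0) (by simp) (by simpa using h)
  refine ⟨hK, ?_⟩
  simp only [shift, hK] at h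
  linarith

lemma profile_eq_and_frestrictLe_eq (hc : ∀ n, CentersApart (radius n) (c n)) (hx : x ∈ K)
    (hx' : x' ∈ K') {n : ℕ}
    (h : frestrictLe (π := fun _ => ℤ) n (x + shift c K) = frestrictLe n (x' + shift c K')) :
    profile n K = profile n K' ∧ frestrictLe (π := fun _ => ℤ) n x = frestrictLe n x' := by
  have hcoord (i : Finset.Iic n) := profile_eq_and_apply_eq hc hx hx' (congrFun h i)
  exact ⟨(hcoord ⟨n, Finset.mem_Iic.2 le_rfl⟩).1, funext fun i => (hcoord i).2⟩

theorem isUniformEmbedding_add_shift (hc : ∀ n, CentersApart (radius n) (c n)) :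
    IsUniformEmbedding fun p : {q : NonemptyCompacts (ℕ → ℤ) × (ℕ → ℤ) // q.2 ∈ q.1} =>
      p.val.2 + shift c p.val.1 := by
  refine IsUniformInducing.isUniformEmbedding (isUniformInducing_iff'.2 ⟨?_, ?_⟩)
  · exact (uniformContinuous_snd.comp uniformContinuous_subtype_val).add
      ((uniformContinuous_shift c).comp (uniformContinuous_fst.comp uniformContinuous_subtype_val))
  · refine ((hasBasis_uniformity_profile.uniformity_prod
      hasBasis_uniformity_pi_frestrictLe).comap _).ge_iff.2 fun ij _ => mem_comap.2
        ⟨_, hasBasis_uniformity_pi_frestrictLe.mem_of_mem (i := max ij.1 ij.2) trivial, ?_⟩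
    rintro ⟨⟨⟨K, x⟩, hx⟩, ⟨⟨K', x'⟩, hx'⟩⟩
      (h : frestrictLe (π := fun _ => ℤ) _ (x + shift c K) = frestrictLe _ (x' + shift c K'))
    have hi := congrArg (frestrictLe₂ (π := fun _ => ℤ) (le_max_left ij.1 ij.2)) h
    have hj := congrArg (frestrictLe₂ (π := fun _ => ℤ) (le_max_right ij.1 ij.2)) h
    exact ⟨(profile_eq_and_frestrictLe_eq hc hx hx' hi).1,
      (profile_eq_and_frestrictLe_eq hc hx hx' hj).2⟩

theorem isClosedEmbedding_add_shift (hc : ∀ n, CentersApart (radius n) (c n)) :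
    IsClosedEmbedding fun p : {q : NonemptyCompacts (ℕ → ℤ) × (ℕ → ℤ) // q.2 ∈ q.1} =>
      p.val.2 + shift c p.val.1 :=
  have : CompleteSpace {q : NonemptyCompacts (ℕ → ℤ) × (ℕ → ℤ) // q.2 ∈ q.1} :=
    NonemptyCompacts.isClosed_setOf_mem.isComplete.completeSpace_coe
  (isUniformEmbedding_add_shift hc).isClosedEmbedding

end Decoding

end CompactsApart

open CompactsApart in
theorem translating_compacts_apart :
    ∃ t : NonemptyCompacts (ℕ → ℤ) → (ℕ → ℤ), Continuous t ∧
      (IsClosedEmbedding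
        (fun p : {q : NonemptyCompacts (ℕ → ℤ) × (ℕ → ℤ) // q.2 ∈ q.1} =>
          p.val.2 + t p.val.1)) ∧
      (∀ K K' : NonemptyCompacts (ℕ → ℤ), K ≠ K' →
        Disjoint ((fun x => x + t K) '' K) ((fun x => x + t K') '' K')) ∧
      (⋃ K : NonemptyCompacts (ℕ → ℤ), (fun x => x + t K) '' K) =
        Set.range (fun p : {q : NonemptyCompacts (ℕ → ℤ) × (ℕ → ℤ) // q.2 ∈ q.1} =>
          p.val.2 + t p.val.1) ∧
      ∀ K : NonemptyCompacts (ℕ → ℤ),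
        (((fun x => x + t K) '' K) + {ε : ℕ → ℤ | ∀ n, ε n = -1 ∨ ε n = 0 ∨ ε n = 1}) ∩
            Set.range (fun p : {q : NonemptyCompacts (ℕ → ℤ) × (ℕ → ℤ) // q.2 ∈ q.1} =>
              p.val.2 + t p.val.1) =
          (fun x => x + t K) '' K := by
  choose c hc using fun n => exists_centersApart (radius n)
  refine ⟨shift c, (uniformContinuous_shift c).continuous, isClosedEmbedding_add_shift hc,
    fun K K' hKK' => Set.disjoint_left.2 ?_, ?_, fun K => ?_⟩
  · rintro - ⟨x, hx, rfl⟩ ⟨x', hx', h⟩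
    exact hKK' (eq_of_add_shift_add_eq hc hx hx' (ε := 0) (by simp) (by simpa using h.symm))
  · ext z
    simp only [mem_iUnion, mem_image, mem_range, Subtype.exists, Prod.exists, exists_prop]
    rfl
  · refine subset_antisymm ?_ fun z hz => ⟨⟨z, hz, 0, fun n => by simp, add_zero z⟩, ?_⟩
    · rintro _ ⟨⟨_, ⟨x, hx, rfl⟩, ε, hε, rfl⟩, ⟨⟨⟨K', x'⟩, hx'⟩, h⟩⟩
      obtain rfl : K = K' := eq_of_add_shift_add_eq hc hx hx'
        (fun n => by rcases hε n with h | h | h <;> simp [h]) h.symm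
      exact ⟨x', hx', h⟩
    · obtain ⟨x, hx, rfl⟩ := hz
      exact ⟨⟨(K, x), hx⟩, rfl⟩
end

section
/- With t defined as t(K)_n = 3·b(K)_n·c(K)_n where c : 𝒦(ℤ^ω) → {-1,1}^ω is injective and b(K)_n = max{|x_n| : x ∈ K}+1, the map T : H → ℤ^ω, T(K,x) = x + t(K), is injective on H = {(K,x) : x ∈ K}. -/
/-!
Since `|x n| < b(K)_n`, the term `3 b(K)_n c(K)_n` dominates the `n`-th coordinate of `T(K, x)`, so
its sign is `c(K)_n`. Hence `T(K, x)` determines `c(K)`, thus `K` by injectivity of `c`, and then `x`.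
-/

open TopologicalSpace

/-- `b(K)_n = max { |x_n| : x ∈ K } + 1`, as an integer. -/
noncomputable def bInt (K : NonemptyCompacts (ℕ → ℤ)) : ℕ → ℤ :=
  fun n => ((sSup {m : ℕ | ∃ x ∈ K, (x n).natAbs = m} : ℕ) : ℤ) + 1

lemma abs_lt_bInt {K : NonemptyCompacts (ℕ → ℤ)} {x : ℕ → ℤ} (hx : x ∈ K) (n : ℕ) :
    |x n| < bInt K n := by
  have hbdd : BddAbove ((fun y : ℕ → ℤ => (y n).natAbs) '' (K : Set (ℕ → ℤ))) :=
    (K.isCompact.image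
      ((continuous_of_discreteTopology (f := Int.natAbs)).comp (continuous_apply n))).bddAbove
  have hle : (x n).natAbs ≤ sSup {m : ℕ | ∃ y ∈ K, (y n).natAbs = m} :=
    le_csSup hbdd ⟨x, hx, rfl⟩
  rw [Int.abs_eq_natAbs, bInt]
  omega

lemma sign_eq_of_add_three_mul_eq {a a' B B' s s' : ℤ} (ha : |a| < B) (ha' : |a'| < B')
    (hs : s = 1 ∨ s = -1) (hs' : s' = 1 ∨ s' = -1) (h : a + 3 * B * s = a' + 3 * B' * s') :
    s = s' := by
  rw [abs_lt] at ha ha'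
  rcases hs with rfl | rfl <;> rcases hs' with rfl | rfl <;> omega

theorem T_injective (c : NonemptyCompacts (ℕ → ℤ) → ℕ → ℤ)
    (hc_val : ∀ K n, c K n = 1 ∨ c K n = -1) (hc_inj : Function.Injective c) :
    Function.Injective
      (fun p : {q : NonemptyCompacts (ℕ → ℤ) × (ℕ → ℤ) // q.2 ∈ q.1} =>
        fun n => p.val.2 n + 3 * bInt p.val.1 n * c p.val.1 n) := by
  rintro ⟨⟨K, x⟩, hx⟩ ⟨⟨L, y⟩, hy⟩ h
  have hcoord (n : ℕ) : x n + 3 * bInt K n * c K n = y n + 3 * bInt L n * c L n :=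
    congrFun h n
  obtain rfl : K = L := hc_inj <| funext fun n =>
    sign_eq_of_add_three_mul_eq (abs_lt_bInt hx n) (abs_lt_bInt hy n)
      (hc_val K n) (hc_val L n) (hcoord n)
  obtain rfl : x = y := funext fun n => add_right_cancel (hcoord n)
  rfl
end

section
/- Suppose for each s ∈ ω^{<ω} a nonempty compact set C_s ⊆ ℤ^ω is given with C_{s'} ⊆ C_s whenever s ⊆ s', and suppose moreover that for every s and every nonempty relatively open U ⊆ C_s there exists ℓ ∈ ω with C_{s⌢ℓ} ⊆ U. Let K₀ be the closure in ℤ^ω × {0,1}^ω of ⋃_s C_s × {h₀(s)} (h₀ the zero-padded prefix encoding), and f₀ : K₀ → ℤ^ω the first-coordinate projection. If X ⊆ ℤ^ω satisfies that {s' ∈ ω^{<ω} : X ∩ C_{s'} = ∅} is cofinal in ω^{<ω} (every finite sequence has an extension in this set), then f₀⁻¹(X) is nowhere dense in K₀. -/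
/-- The prefix encoding `h(n) = 0^n 1`, extended to finite sequences by concatenation. -/
def hWord (s : List ℕ) : List Bool :=
  (s.map fun n => List.replicate n false ++ [true]).flatten

/-- `h₀(s)` is `h(s)` padded with zeroes (`false`) to an infinite sequence. -/
def hZero (s : List ℕ) : ℕ → Bool :=
  fun i => (hWord s).getD i false

/-!
A nonempty open subset of `K₀` contains a point `(x, h₀(u))` with `x ∈ C u`, together with a box
`V × [h₀(u) ↾ N]` where `N ≥ |h(u)|`; the only points of `⋃ C s × {h₀(s)}` in that box come from
extensions `s` of `u`. If `C u ∩ V` is infinite, the refinement property gives a child `u ++ [ℓ]`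
with `ℓ ≥ N` and `C (u ++ [ℓ]) ⊆ V`; for an extension `t` of it with `X ∩ C t = ∅`, the smaller
box `V × [h₀(t) ↾ |h(t)|]` only sees points of `C t`. If `C u ∩ V` is finite, `x` is isolated in
`C u`, so some child has `C (u ++ [ℓ]) = {x}`, cofinality gives `x ∉ X`, and a box around
`(x, h₀(u))` only sees first coordinate `x`. Either way the closure inside the box misses `X`.
-/

open Set Topology PiNat

lemma hWord_cons (a : ℕ) (u : List ℕ) :
    hWord (a :: u) = List.replicate a false ++ true :: hWord u := by
  simp [hWord]

@[simp] lemma hWord_nil : hWord [] = [] := rfl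

@[simp] lemma length_hWord_cons (a : ℕ) (u : List ℕ) :
    (hWord (a :: u)).length = a + 1 + (hWord u).length := by
  simp [hWord_cons]; omega

@[simp] lemma hZero_nil (i : ℕ) : hZero [] i = false := by simp [hZero]

lemma hZero_cons (a : ℕ) (u : List ℕ) (i : ℕ) :
    hZero (a :: u) i = if i < a then false else if i = a then true else hZero u (i - (a + 1)) := by
  simp only [hZero, hWord_cons, List.getD_eq_getElem?_getD]
  split_ifs with hlt heq
  · rw [List.getElem?_append_left (by simpa using hlt)]; simp [hlt]
  · subst heq; rw [List.getElem?_append_right (by simp)]; simp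
  · rw [List.getElem?_append_right (by rw [List.length_replicate]; omega), List.length_replicate,
      show i - a = i - (a + 1) + 1 by omega]
    simp

lemma hZero_cons_add (a : ℕ) (u : List ℕ) (j : ℕ) : hZero (a :: u) (a + 1 + j) = hZero u j := by
  rw [hZero_cons, if_neg (by omega), if_neg (by omega), Nat.add_sub_cancel_left]

lemma hZero_append_cons_mem_cylinder (u r : List ℕ) (ℓ : ℕ) :
    hZero (u ++ ℓ :: r) ∈ cylinder (hZero u) ((hWord u).length + ℓ) := by
  induction u with
  | nil => intro i hi; simp [hZero_cons, show i < ℓ by simpa using hi]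
  | cons a u ih =>
    intro i hi
    simp only [List.cons_append, hZero_cons]
    split_ifs
    · rfl
    · rfl
    · exact ih _ (by rw [length_hWord_cons] at hi; omega)

lemma prefix_of_hZero_mem_cylinder {u s : List ℕ}
    (h : hZero s ∈ cylinder (hZero u) (hWord u).length) : u <+: s := by
  induction u generalizing s with
  | nil => exact List.nil_prefix
  | cons a u ih =>
    have ha := h a (by rw [length_hWord_cons]; omega)
    cases s with
    | nil => simp [hZero_cons] at ha
    | cons b s =>
      obtain rfl : b = a := by
        refine le_antisymm (not_lt.mp fun hab => ?_) (not_lt.mp fun hba => ?_)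
        · simp [hZero_cons, hab] at ha
        · have hb := h b (by rw [length_hWord_cons]; omega)
          simp [hZero_cons, hba] at hb
      refine List.cons_prefix_cons.mpr ⟨rfl, ih fun j hj => ?_⟩
      simpa only [hZero_cons_add] using h (b + 1 + j) (by rw [length_hWord_cons]; omega)

lemma isNowhereDense_of_forall_exists_isOpen_disjoint {Z : Type*} [TopologicalSpace Z]
    {A : Set Z} (h : ∀ U, IsOpen U → U.Nonempty → ∃ V ⊆ U, IsOpen V ∧ V.Nonempty ∧ Disjoint V A) :
    IsNowhereDense A := by
  rw [IsNowhereDense, interior_eq_empty_iff_dense_compl, dense_iff_inter_open]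
  intro U hU hUne
  obtain ⟨V, hVU, hV, ⟨z, hz⟩, hVA⟩ := h U hU hUne
  exact ⟨z, hVU hz, (hVA.closure_right hV).notMem_of_mem_left hz⟩

lemma PiNat.exists_cylinder_subset_of_mem_nhds {E : ℕ → Type*} [∀ n, TopologicalSpace (E n)]
    [∀ n, DiscreteTopology (E n)] {x : ∀ n, E n} {T : Set (∀ n, E n)} (hT : T ∈ 𝓝 x) :
    ∃ n, cylinder x n ⊆ T := by
  obtain ⟨_, ⟨y, n, rfl⟩, hxy, hyT⟩ := (isTopologicalBasis_cylinders E).mem_nhds_iff.mp hT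
  exact ⟨n, (mem_cylinder_iff_eq.mp hxy).symm ▸ hyT⟩

lemma exists_isOpen_inter_eq_singleton_of_finite {Y : Type*} [TopologicalSpace Y] [T1Space Y]
    {F V : Set Y} (hV : IsOpen V) (hfin : (F ∩ V).Finite) {x : Y} (hx : x ∈ F ∩ V) :
    ∃ V' ⊆ V, IsOpen V' ∧ x ∈ V' ∧ F ∩ V' = {x} := by
  refine ⟨V \ ((F ∩ V) \ {x}), sdiff_subset, hV.sdiff hfin.sdiff.isClosed,
    ⟨hx.2, fun h => h.2 rfl⟩, ?_⟩
  ext y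
  constructor
  · rintro ⟨hyF, hyV, hy⟩
    by_contra hyx
    exact hy ⟨⟨hyF, hyV⟩, hyx⟩
  · rintro rfl
    exact ⟨hx.1, hx.2, fun h => h.2 rfl⟩

section codedUnion

variable {Y : Type*} {C : List ℕ → Set Y}

/-- `closure (codedUnion C)` is the space `K₀`. -/
def codedUnion (C : List ℕ → Set Y) : Set (Y × (ℕ → Bool)) :=
  ⋃ s, C s ×ˢ {hZero s}

lemma mk_mem_codedUnion {s : List ℕ} {x : Y} (hx : x ∈ C s) : (x, hZero s) ∈ codedUnion C :=
  mem_iUnion.mpr ⟨s, hx, rfl⟩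

lemma exists_prefix_of_mem_codedUnion {u : List ℕ} {p : Y × (ℕ → Bool)}
    (hp : p ∈ codedUnion C) (hpu : p.2 ∈ cylinder (hZero u) (hWord u).length) :
    ∃ s, u <+: s ∧ p.1 ∈ C s := by
  obtain ⟨s, hs, hps⟩ := mem_iUnion.mp hp
  rw [mem_singleton_iff.mp hps] at hpu
  exact ⟨s, prefix_of_hZero_mem_cylinder hpu, hs⟩

end codedUnion

structure IsRefiningScheme {Y : Type*} [TopologicalSpace Y] (C : List ℕ → Set Y) : Prop where
  nonempty : ∀ s, (C s).Nonempty
  isClosed : ∀ s, IsClosed (C s)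
  antitone : ∀ s s' : List ℕ, s <+: s' → C s' ⊆ C s
  exists_child_subset : ∀ (s : List ℕ) (V : Set Y), IsOpen V → (C s ∩ V).Nonempty →
    ∃ ℓ : ℕ, C (s ++ [ℓ]) ⊆ C s ∩ V

namespace IsRefiningScheme

variable {Y : Type*} [TopologicalSpace Y] [T1Space Y] {C : List ℕ → Set Y} {X : Set Y}

lemma exists_large_child_subset_of_infinite (hC : IsRefiningScheme C) {u : List ℕ} {V : Set Y}
    (hV : IsOpen V) (hinf : (C u ∩ V).Infinite) (N : ℕ) : ∃ ℓ, N ≤ ℓ ∧ C (u ++ [ℓ]) ⊆ V := by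
  -- Refine into `V` minus one chosen point of each child `u ++ [ℓ]` with `ℓ < N`.
  choose y hy using fun ℓ => hC.nonempty (u ++ [ℓ])
  have hF : (y '' Iio N).Finite := (finite_Iio N).image y
  obtain ⟨x, ⟨hxu, hxV⟩, hxF⟩ := (hinf.sdiff hF).nonempty
  obtain ⟨ℓ, hℓ⟩ :=
    hC.exists_child_subset u (V \ y '' Iio N) (hV.sdiff hF.isClosed) ⟨x, hxu, hxV, hxF⟩
  refine ⟨ℓ, not_lt.mp fun hℓN => ?_, fun z hz => (hℓ hz).2.1⟩
  exact (hℓ (hy ℓ)).2.2 (mem_image_of_mem y hℓN)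

lemma exists_isOpen_of_infinite (hC : IsRefiningScheme C)
    (hcof : ∀ s : List ℕ, ∃ s' : List ℕ, s <+: s' ∧ X ∩ C s' = ∅) {u : List ℕ} {V : Set Y}
    (hV : IsOpen V) (hinf : (C u ∩ V).Infinite) (N : ℕ) :
    ∃ S ⊆ V ×ˢ cylinder (hZero u) N, IsOpen S ∧ (S ∩ codedUnion C).Nonempty ∧
      ∃ t, X ∩ C t = ∅ ∧ S ∩ codedUnion C ⊆ Prod.fst ⁻¹' C t := by
  obtain ⟨ℓ, hNℓ, hℓV⟩ := hC.exists_large_child_subset_of_infinite hV hinf N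
  obtain ⟨_, ⟨r, rfl⟩, hXt⟩ := hcof (u ++ [ℓ])
  set t := u ++ [ℓ] ++ r
  obtain ⟨y, hy⟩ := hC.nonempty t
  have htu : hZero t ∈ cylinder (hZero u) N := by
    simpa [t] using cylinder_anti _ (by omega) (hZero_append_cons_mem_cylinder u r ℓ)
  refine ⟨V ×ˢ (cylinder (hZero u) N ∩ cylinder (hZero t) (hWord t).length),
    prod_mono_right inter_subset_left,
    hV.prod ((isOpen_cylinder _ _ _).inter (isOpen_cylinder _ _ _)),
    ⟨(y, hZero t), ⟨hℓV (hC.antitone _ _ (List.prefix_append _ _) hy), htu,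
      self_mem_cylinder _ _⟩, mk_mem_codedUnion hy⟩, t, hXt, ?_⟩
  rintro p ⟨⟨-, -, hpt⟩, hp⟩
  obtain ⟨s, hts, hps⟩ := exists_prefix_of_mem_codedUnion hp hpt
  exact hC.antitone _ _ hts hps

lemma exists_isOpen_of_finite (hC : IsRefiningScheme C)
    (hcof : ∀ s : List ℕ, ∃ s' : List ℕ, s <+: s' ∧ X ∩ C s' = ∅) {u : List ℕ} {V : Set Y}
    (hV : IsOpen V) (hfin : (C u ∩ V).Finite) {x : Y} (hx : x ∈ C u ∩ V) {N : ℕ}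
    (hN : (hWord u).length ≤ N) :
    ∃ S ⊆ V ×ˢ cylinder (hZero u) N, IsOpen S ∧ (S ∩ codedUnion C).Nonempty ∧
      ∃ t, X ∩ C t = ∅ ∧ S ∩ codedUnion C ⊆ Prod.fst ⁻¹' C t := by
  obtain ⟨V', hV'V, hV', hxV', hCV'⟩ := exists_isOpen_inter_eq_singleton_of_finite hV hfin hx
  obtain ⟨ℓ, hℓ⟩ := hC.exists_child_subset u V' hV' ⟨x, hCV'.symm ▸ rfl⟩
  obtain ⟨t, hut, hXt⟩ := hcof (u ++ [ℓ])
  have hCt : C t ⊆ {x} := hCV' ▸ (hC.antitone _ _ hut).trans hℓ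
  have hxt : x ∈ C t := by
    obtain ⟨y, hy⟩ := hC.nonempty t
    rwa [← mem_singleton_iff.mp (hCt hy)]
  refine ⟨V' ×ˢ cylinder (hZero u) N, prod_mono_left hV'V, hV'.prod (isOpen_cylinder _ _ _),
    ⟨(x, hZero u), ⟨hxV', self_mem_cylinder _ _⟩, mk_mem_codedUnion hx.1⟩, t, hXt, ?_⟩
  rintro p ⟨⟨hpV', hpu⟩, hp⟩
  obtain ⟨s, hus, hps⟩ := exists_prefix_of_mem_codedUnion hp (cylinder_anti _ hN hpu)
  have hpx : p.1 ∈ C u ∩ V' := ⟨hC.antitone _ _ hus hps, hpV'⟩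
  rw [hCV', mem_singleton_iff] at hpx
  exact mem_preimage.mpr (hpx ▸ hxt)

lemma exists_isOpen_subset_forall_fst_notMem (hC : IsRefiningScheme C)
    (hcof : ∀ s : List ℕ, ∃ s' : List ℕ, s <+: s' ∧ X ∩ C s' = ∅) {u : List ℕ} {x : Y}
    (hx : x ∈ C u) {W : Set (Y × (ℕ → Bool))} (hW : W ∈ 𝓝 (x, hZero u)) :
    ∃ S ⊆ W, IsOpen S ∧ (S ∩ codedUnion C).Nonempty ∧
      ∀ p ∈ closure (codedUnion C) ∩ S, p.1 ∉ X := by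
  obtain ⟨V, T, hV, hxV, hT, huT, hVT⟩ := mem_nhds_prod_iff'.mp hW
  obtain ⟨n, hn⟩ := exists_cylinder_subset_of_mem_nhds (hT.mem_nhds huT)
  set N := max n (hWord u).length
  have hNW : V ×ˢ cylinder (hZero u) N ⊆ W :=
    (prod_mono_right ((cylinder_anti _ (le_max_left _ _)).trans hn)).trans hVT
  obtain ⟨S, hSN, hS, hSne, t, hXt, hSt⟩ := (C u ∩ V).finite_or_infinite.elim
    (fun hfin => hC.exists_isOpen_of_finite hcof hV hfin ⟨hx, hxV⟩ (le_max_right _ _))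
    (fun hinf => hC.exists_isOpen_of_infinite hcof hV hinf N)
  refine ⟨S, hSN.trans hNW, hS, hSne, fun p hp hpX => ?_⟩
  have hpt : p ∈ Prod.fst ⁻¹' C t :=
    closure_minimal hSt ((hC.isClosed t).preimage continuous_fst) (hS.inter_closure hp.symm)
  exact (eq_empty_iff_forall_notMem.mp hXt) p.1 ⟨hpX, hpt⟩

theorem isNowhereDense_preimage_fst (hC : IsRefiningScheme C)
    (hcof : ∀ s : List ℕ, ∃ s' : List ℕ, s <+: s' ∧ X ∩ C s' = ∅) :
    IsNowhereDense ((fun p : closure (codedUnion C) => (p : Y × (ℕ → Bool)).1) ⁻¹' X) := by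
  refine isNowhereDense_of_forall_exists_isOpen_disjoint fun U hU ⟨p, hpU⟩ => ?_
  obtain ⟨W, hW, rfl⟩ := isOpen_induced_iff.mp hU
  obtain ⟨⟨x, z⟩, hxzD, hxzW⟩ := (closure_inter_open_nonempty_iff hW).mp ⟨p, p.2, hpU⟩
  obtain ⟨u, hxu, hzu⟩ := mem_iUnion.mp hxzD
  obtain rfl : z = hZero u := hzu
  obtain ⟨S, hSW, hS, ⟨q, hqS, hqD⟩, hSX⟩ :=
    hC.exists_isOpen_subset_forall_fst_notMem hcof hxu (hW.mem_nhds hxzW)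
  exact ⟨Subtype.val ⁻¹' S, preimage_mono hSW, hS.preimage continuous_subtype_val,
    ⟨⟨q, subset_closure hqD⟩, hqS⟩, disjoint_left.mpr fun r hrS => hSX r ⟨r.2, hrS⟩⟩

end IsRefiningScheme

theorem preimage_nowhereDense_in_K0
    (C : List ℕ → Set (ℕ → ℤ))
    (hne : ∀ s, (C s).Nonempty) (hcpt : ∀ s, IsCompact (C s))
    (hmono : ∀ s s' : List ℕ, s <+: s' → C s' ⊆ C s)
    (hrefine : ∀ (s : List ℕ) (V : Set (ℕ → ℤ)), IsOpen V → (C s ∩ V).Nonempty →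
      ∃ ℓ : ℕ, C (s ++ [ℓ]) ⊆ C s ∩ V)
    (X : Set (ℕ → ℤ))
    (hcof : ∀ s : List ℕ, ∃ s' : List ℕ, s <+: s' ∧ X ∩ C s' = ∅) :
    IsNowhereDense
      ((fun p : closure (⋃ s : List ℕ, C s ×ˢ ({hZero s} : Set (ℕ → Bool))) =>
          (p : (ℕ → ℤ) × (ℕ → Bool)).1) ⁻¹' X) :=
  IsRefiningScheme.isNowhereDense_preimage_fst
    ⟨hne, fun s => (hcpt s).isClosed, hmono, hrefine⟩ hcof
end

section
/- Let G be an abelian Polish group in which every compact subset is contained in a compact subgroup (G is hull-compact). Then every Haar meager subset of G is strongly Haar meager. -/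
/-!
Let `f : K → G` witness that `B` is Haar meager and let `H` be a compact subgroup containing
`f '' K`; we show that `H` itself witnesses strong Haar meagerness. Fix a translate `D` of `B`.
The set `{(h, k) ∈ H × K | f k + h ∈ D}` has meager slices `f⁻¹' (D - h)` over every `h`, so it
is meager by the Kuratowski–Ulam theorem, and hence so is its slice `(D - f k) ∩ H` over some
`k`. Since `f k ∈ H`, translating back by `f k` is a homeomorphism of `H`, so `D ∩ H` is meager
in `H`.
-/

open Filter Set TopologicalSpace

section KuratowskiUlam

variable {X Y : Type*} [TopologicalSpace X] [TopologicalSpace Y]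

theorem IsOpen.eventually_residual_dense_preimage_prodMk [SecondCountableTopology Y]
    {W : Set (X × Y)} (hWo : IsOpen W) (hWd : Dense W) :
    ∀ᶠ x in residual X, Dense (Prod.mk x ⁻¹' W) := by
  have hbasic : ∀ V ∈ countableBasis Y, ∀ᶠ x in residual X, (V ∩ Prod.mk x ⁻¹' W).Nonempty := by
    intro V hV
    have hopen : IsOpen (⋃ y ∈ V, (·, y) ⁻¹' W) :=
      isOpen_biUnion fun y _ => hWo.preimage (continuous_id.prodMk continuous_const)
    have hdense : Dense (⋃ y ∈ V, (·, y) ⁻¹' W) := by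
      refine dense_iff_inter_open.mpr fun U hU hUne => ?_
      obtain ⟨⟨x, y⟩, ⟨hx, hy⟩, hW⟩ := hWd.inter_open_nonempty _
        (hU.prod (isOpen_of_mem_countableBasis hV)) (hUne.prod (nonempty_of_mem_countableBasis hV))
      exact ⟨x, hx, mem_biUnion hy hW⟩
    filter_upwards [residual_of_dense_open hopen hdense] with x hx
    obtain ⟨y, hy, hW⟩ := mem_iUnion₂.mp hx
    exact ⟨y, hy, hW⟩
  filter_upwards [(eventually_countable_ball (countable_countableBasis Y)).mpr hbasic] with x hx
  exact (isBasis_countableBasis Y).dense_iff.mpr fun V hV _ => hx V hV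

theorem IsMeagre.eventually_residual_isMeagre_preimage_prodMk [SecondCountableTopology Y]
    {M : Set (X × Y)} (hM : IsMeagre M) :
    ∀ᶠ x in residual X, IsMeagre (Prod.mk x ⁻¹' M) := by
  obtain ⟨S, hSo, hSd, hSc, hSM⟩ := mem_residual_iff.mp hM
  filter_upwards [(eventually_countable_ball hSc).mpr fun W hW =>
    (hSo W hW).eventually_residual_dense_preimage_prodMk (hSd W hW)] with x hx
  have hslices : (⋂ W ∈ S, Prod.mk x ⁻¹' W) ∈ residual Y :=
    (countable_bInter_mem hSc).mpr fun W hW =>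
      residual_of_dense_open ((hSo W hW).preimage (Continuous.prodMk_right x)) (hx W hW)
  refine mem_of_superset hslices fun y hy => hSM ?_
  simpa only [mem_sInter, mem_iInter₂, mem_preimage] using hy

theorem BaireMeasurableSet.isMeagre_of_forall_isMeagre_preimage_prodMk [BaireSpace X]
    [BaireSpace Y] [SecondCountableTopology Y] {E : Set (X × Y)} (hE : BaireMeasurableSet E)
    (hslices : ∀ x, IsMeagre (Prod.mk x ⁻¹' E)) : IsMeagre E := by
  obtain ⟨W, hWo, hEW⟩ := hE.residualEq_isOpen
  have hM : IsMeagre {p | ¬(p ∈ E ↔ p ∈ W)} :=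
    mem_of_superset hEW fun p hp => not_not.mpr (iff_of_eq hp)
  have hWslices : ∀ᶠ x in residual X, Prod.mk x ⁻¹' W = ∅ := by
    filter_upwards [hM.eventually_residual_isMeagre_preimage_prodMk] with x hx
    refine not_nonempty_iff_eq_empty.mp fun hne =>
      not_isMeagre_of_isOpen (hWo.preimage (Continuous.prodMk_right x)) hne ?_
    refine ((hslices x).union hx).mono fun y hy => ?_
    by_cases hyE : (x, y) ∈ E
    · exact Or.inl hyE
    · exact Or.inr fun hiff => hyE (hiff.mpr hy)
  have hW : W = ∅ := by
    refine eq_empty_iff_forall_notMem.mpr fun ⟨x₀, y₀⟩ hp => ?_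
    obtain ⟨x, hxW, hx⟩ := (dense_of_mem_residual hWslices).inter_open_nonempty _
      (hWo.preimage (continuous_id.prodMk continuous_const)) ⟨x₀, hp⟩
    exact (hx.subset hxW : (y₀ : Y) ∈ (∅ : Set Y))
  exact hM.mono fun p hp => by simpa [hW] using hp

end KuratowskiUlam

theorem isMeagre_of_forall_isMeagre_preimage_add_right {H K : Type*} [AddGroup H]
    [TopologicalSpace H] [IsTopologicalAddGroup H] [BaireSpace H] [SecondCountableTopology H]
    [TopologicalSpace K] [BaireSpace K] [SecondCountableTopology K] [Nonempty K] {f : K → H}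
    (hf : Continuous f) {D : Set H} (hD : BaireMeasurableSet D)
    (hslices : ∀ h, IsMeagre ((fun k => f k + h) ⁻¹' D)) : IsMeagre D := by
  set φ : H × K → H := fun p => f p.2 + p.1
  have hφc : Continuous φ := (hf.comp continuous_snd).add continuous_fst
  have hφo : IsOpenMap φ := by
    intro W hW
    have hunion : φ '' W = ⋃ k, (f k + ·) '' ((·, k) ⁻¹' W) := by
      ext x
      simp only [mem_image, mem_iUnion, mem_preimage]
      exact ⟨fun ⟨⟨h, k⟩, hW, hx⟩ => ⟨k, h, hW, hx⟩, fun ⟨k, h, hW, hx⟩ => ⟨(h, k), hW, hx⟩⟩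
    rw [hunion]
    exact isOpen_iUnion fun k =>
      isOpenMap_add_left (f k) _ (hW.preimage (continuous_id.prodMk continuous_const))
  have hE : IsMeagre (φ ⁻¹' D) :=
    (hD.preimage hφc hφo).isMeagre_of_forall_isMeagre_preimage_prodMk hslices
  have hE' := hE.preimage_of_isOpenMap (Homeomorph.prodComm K H).continuous
    (Homeomorph.prodComm K H).isOpenMap
  obtain ⟨k, hk⟩ := (dense_of_mem_residual hE'.eventually_residual_isMeagre_preimage_prodMk).nonempty
  have hD' := IsMeagre.preimage_of_isOpenMap (Homeomorph.addLeft (-f k)).continuous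
    (Homeomorph.addLeft (-f k)).isOpenMap hk
  simpa [φ, preimage_preimage] using hD'

theorem hullCompact_haarMeager_eq_stronglyHaarMeager {G : Type*} [AddCommGroup G]
    [TopologicalSpace G] [IsTopologicalAddGroup G] [PolishSpace G]
    (hull : ∀ K : Set G, IsCompact K → ∃ H : AddSubgroup G, IsCompact (H : Set G) ∧ K ⊆ H)
    (A : Set G) (hA : HaarMeager A) : StronglyHaarMeager A := by
  obtain ⟨B, hAB, hB, K, _, _, _, f, hf, hmeag⟩ := hA
  obtain ⟨H, hHc, hfH⟩ := hull (range f) (isCompact_range hf)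
  borelize G
  refine ⟨B, hAB, hB, H, ⟨0, H.zero_mem⟩, hHc, fun g => ?_⟩
  have : CompactSpace H := isCompact_iff_compactSpace.mp hHc
  have : SecondCountableTopology H := Subtype.secondCountableTopology (H : Set G)
  have hD : MeasurableSet ((fun x => x + g) '' B) := by
    rw [image_add_right]; exact (continuous_add_const _).measurable hB
  refine isMeagre_of_forall_isMeagre_preimage_add_right (H := H)
    (f := codRestrict f H fun k => hfH (mem_range_self k)) (hf.codRestrict _)
    (measurable_subtype_coe hD).baireMeasurableSet fun h => ?_
  convert hmeag (g - h) using 1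
  ext k
  simp only [mem_preimage, image_add_right, val_codRestrict_apply, AddSubgroup.coe_add]
  rw [show f k + -(g - h) = f k + h + -g by abel]
end
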